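/- For any real v, conjugation of the r-matrix by exp(v·ad E₁₃) sends the Drinfeld–Jimbo r-matrix of sl(3) to r_DJ + v·r_j, where r_j = −(H₁₃ ∧ E₁₃ + 2E₁₂ ∧ E₂₃) up to sign conventions; consequently r_j = H₁₃ ∧ E₁₃ + 2E₁₂ ∧ E₂₃ satisfies the classical Yang–Baxter equation in M₃(ℝ)^{⊗3}. -/

import Mathlib

noncomputable section

open Matrix Kronecker

abbrev M3 := Matrix (Fin 3) (Fin 3) ℝ

def Eij (i j : Fin 3) : M3 := Matrix.single i j 1

def H13 : M3 := Eij 0 0 - Eij 2 2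

def T3 (a b c : M3) : Matrix ((Fin 3 × Fin 3) × Fin 3) ((Fin 3 × Fin 3) × Fin 3) ℝ :=
  (a ⊗ₖ b) ⊗ₖ c

/-- r_j placed in positions (1,2): H₁₃∧E₁₃ + 2E₁₂∧E₂₃ with x∧y = x⊗y − y⊗x. -/
def rj12 : Matrix ((Fin 3 × Fin 3) × Fin 3) ((Fin 3 × Fin 3) × Fin 3) ℝ :=
  T3 H13 (Eij 0 2) 1 - T3 (Eij 0 2) H13 1
    + (2 : ℝ) • (T3 (Eij 0 1) (Eij 1 2) 1 - T3 (Eij 1 2) (Eij 0 1) 1)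

def rj13 : Matrix ((Fin 3 × Fin 3) × Fin 3) ((Fin 3 × Fin 3) × Fin 3) ℝ :=
  T3 H13 1 (Eij 0 2) - T3 (Eij 0 2) 1 H13
    + (2 : ℝ) • (T3 (Eij 0 1) 1 (Eij 1 2) - T3 (Eij 1 2) 1 (Eij 0 1))

def rj23 : Matrix ((Fin 3 × Fin 3) × Fin 3) ((Fin 3 × Fin 3) × Fin 3) ℝ :=
  T3 1 H13 (Eij 0 2) - T3 1 (Eij 0 2) H13
    + (2 : ℝ) • (T3 1 (Eij 0 1) (Eij 1 2) - T3 1 (Eij 1 2) (Eij 0 1))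

-- Auxiliary integer versions, so the identity can be verified by `decide`.
abbrev M3Z := Matrix (Fin 3) (Fin 3) ℤ

def EijZ (i j : Fin 3) : M3Z := Matrix.single i j 1

def H13Z : M3Z := EijZ 0 0 - EijZ 2 2

def T3Z (a b c : M3Z) : Matrix ((Fin 3 × Fin 3) × Fin 3) ((Fin 3 × Fin 3) × Fin 3) ℤ :=
  (a ⊗ₖ b) ⊗ₖ c

def rj12Z : Matrix ((Fin 3 × Fin 3) × Fin 3) ((Fin 3 × Fin 3) × Fin 3) ℤ :=
  T3Z H13Z (EijZ 0 2) 1 - T3Z (EijZ 0 2) H13Z 1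
    + (2 : ℤ) • (T3Z (EijZ 0 1) (EijZ 1 2) 1 - T3Z (EijZ 1 2) (EijZ 0 1) 1)

def rj13Z : Matrix ((Fin 3 × Fin 3) × Fin 3) ((Fin 3 × Fin 3) × Fin 3) ℤ :=
  T3Z H13Z 1 (EijZ 0 2) - T3Z (EijZ 0 2) 1 H13Z
    + (2 : ℤ) • (T3Z (EijZ 0 1) 1 (EijZ 1 2) - T3Z (EijZ 1 2) 1 (EijZ 0 1))

def rj23Z : Matrix ((Fin 3 × Fin 3) × Fin 3) ((Fin 3 × Fin 3) × Fin 3) ℤ :=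
  T3Z 1 H13Z (EijZ 0 2) - T3Z 1 (EijZ 0 2) H13Z
    + (2 : ℤ) • (T3Z 1 (EijZ 0 1) (EijZ 1 2) - T3Z 1 (EijZ 1 2) (EijZ 0 1))

def φ : Matrix ((Fin 3 × Fin 3) × Fin 3) ((Fin 3 × Fin 3) × Fin 3) ℤ →+*
    Matrix ((Fin 3 × Fin 3) × Fin 3) ((Fin 3 × Fin 3) × Fin 3) ℝ :=
  (Int.castRingHom ℝ).mapMatrix

lemma map_kron {n m : Type*} [Fintype n] [Fintype m] [DecidableEq n] [DecidableEq m]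
    (A : Matrix n n ℤ) (B : Matrix m m ℤ) :
    (A ⊗ₖ B).map ((↑) : ℤ → ℝ) = (A.map (↑)) ⊗ₖ (B.map (↑)) := by
  ext ⟨i, j⟩ ⟨k, l⟩
  simp [Matrix.kroneckerMap_apply, Matrix.map_apply]

lemma map_Eij (i j : Fin 3) : (EijZ i j).map ((↑) : ℤ → ℝ) = Eij i j := by
  ext a b
  simp [EijZ, Eij, Matrix.single, Matrix.map_apply]

lemma map_H13 : H13Z.map ((↑) : ℤ → ℝ) = H13 := by
  simp [H13Z, H13, Matrix.map_sub, map_Eij]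

lemma map_one3 : ((1 : M3Z)).map ((↑) : ℤ → ℝ) = (1 : M3) := by
  ext a b
  simp [Matrix.one_apply, Matrix.map_apply, apply_ite ((↑) : ℤ → ℝ)]

lemma φ_T3 (a b c : M3Z) (a' b' c' : M3)
    (ha : a.map ((↑) : ℤ → ℝ) = a') (hb : b.map ((↑) : ℤ → ℝ) = b')
    (hc : c.map ((↑) : ℤ → ℝ) = c') :
    φ (T3Z a b c) = T3 a' b' c' := by
  show (T3Z a b c).map ((↑) : ℤ → ℝ) = T3 a' b' c'
  simp [T3Z, T3, map_kron, ha, hb, hc]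

lemma two_zsmul_eq {n : Type*} (M : Matrix n n ℝ) : (2 : ℤ) • M = (2 : ℝ) • M := by
  rw [← Int.cast_smul_eq_zsmul ℝ]
  norm_num

lemma map_rj12 : φ rj12Z = rj12 := by
  rw [rj12Z, rj12, map_add, map_sub, map_zsmul, map_sub,
    φ_T3 _ _ _ _ _ _ map_H13 (map_Eij 0 2) map_one3,
    φ_T3 _ _ _ _ _ _ (map_Eij 0 2) map_H13 map_one3,
    φ_T3 _ _ _ _ _ _ (map_Eij 0 1) (map_Eij 1 2) map_one3,
    φ_T3 _ _ _ _ _ _ (map_Eij 1 2) (map_Eij 0 1) map_one3, two_zsmul_eq]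

lemma map_rj13 : φ rj13Z = rj13 := by
  rw [rj13Z, rj13, map_add, map_sub, map_zsmul, map_sub,
    φ_T3 _ _ _ _ _ _ map_H13 map_one3 (map_Eij 0 2),
    φ_T3 _ _ _ _ _ _ (map_Eij 0 2) map_one3 map_H13,
    φ_T3 _ _ _ _ _ _ (map_Eij 0 1) map_one3 (map_Eij 1 2),
    φ_T3 _ _ _ _ _ _ (map_Eij 1 2) map_one3 (map_Eij 0 1), two_zsmul_eq]

lemma map_rj23 : φ rj23Z = rj23 := by
  rw [rj23Z, rj23, map_add, map_sub, map_zsmul, map_sub,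
    φ_T3 _ _ _ _ _ _ map_one3 map_H13 (map_Eij 0 2),
    φ_T3 _ _ _ _ _ _ map_one3 (map_Eij 0 2) map_H13,
    φ_T3 _ _ _ _ _ _ map_one3 (map_Eij 0 1) (map_Eij 1 2),
    φ_T3 _ _ _ _ _ _ map_one3 (map_Eij 1 2) (map_Eij 0 1), two_zsmul_eq]

set_option maxHeartbeats 4000000 in
lemma keyZ : rj12Z * rj13Z - rj13Z * rj12Z + (rj12Z * rj23Z - rj23Z * rj12Z)
    + (rj13Z * rj23Z - rj23Z * rj13Z) = 0 := by decide

/-- the jordanian r-matrix r_j = H₁₃ ∧ E₁₃ + 2E₁₂ ∧ E₂₃ satisfies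
the classical Yang–Baxter equation. -/
theorem stmt13 : ⁅rj12, rj13⁆ + ⁅rj12, rj23⁆ + ⁅rj13, rj23⁆ = 0 := by
  rw [← map_rj12, ← map_rj13, ← map_rj23]
  simp only [Ring.lie_def, ← map_mul φ, ← map_sub, ← map_add]
  rw [keyZ, map_zero]
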